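/- arXiv:1106.1791 — 3 statements merged into one kernel-verified Lean document; each statement's English description precedes it below -/
import Mathlib

section
/- Let I be a map sending every probability measure on every finite set to a nonnegative real number. Suppose: (1) I is invariant under bijections; (2) I is continuous on the simplex of probability measures on {1,…,n} for each n; (3) I((1)) = 0, where (1) is the unique probability measure on a one-element set; (4) for any probability measure p = (p_1,…,p_n) on {1,…,n} and any probability measures q(1),…,q(n) on finite sets X_1,…,X_n, one has I(p_1 q(1) ⊕ ⋯ ⊕ p_n q(n)) = I(p) + Σ_{i=1}^n p_i I(q(i)). Then there exists a constant c ≥ 0 such that I(p) = c·H(p) for all p, where H is Shannon entropy. Conversely, any constant nonnegative multiple of Shannon entropy satisfies conditions (1)–(4). -/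
open scoped BigOperators Classical
open Filter Topology Real

/-- `p` is a probability measure on the finite set `X`. -/
def IsProb {X : Type} [Fintype X] (p : X → ℝ) : Prop :=
  (∀ i, 0 ≤ p i) ∧ ∑ i, p i = 1

/-- `p` is a (nonnegative) measure on the finite set `X`. -/
def IsMeas {X : Type} [Fintype X] (p : X → ℝ) : Prop :=
  ∀ i, 0 ≤ p i

/-- `f` is a measure-preserving function from `(X, p)` to `(Y, q)`. -/
def IsMP {X Y : Type} [Fintype X] [Fintype Y] (p : X → ℝ) (q : Y → ℝ) (f : X → Y) : Prop :=
  ∀ j : Y, q j = ∑ i, if f i = j then p i else 0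

/-- Shannon entropy (with the convention `0 * log 0 = 0`, automatic since `Real.log 0 = 0`). -/
noncomputable def shannon {X : Type} [Fintype X] (p : X → ℝ) : ℝ :=
  -∑ i, p i * Real.log (p i)

/-- The convex combination `λ p ⊕ (1 - λ) q` on the disjoint union. -/
noncomputable def cvx (lam : ℝ) {X Y : Type} (p : X → ℝ) (q : Y → ℝ) : X ⊕ Y → ℝ :=
  Sum.elim (fun i => lam * p i) (fun j => (1 - lam) * q j)

/-- The direct sum `p ⊕ q` on the disjoint union. -/
def dsum {X Y : Type} (p : X → ℝ) (q : Y → ℝ) : X ⊕ Y → ℝ :=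
  Sum.elim p q

/-- Extended Shannon entropy of a measure on a finite set. -/
noncomputable def shannonExt {X : Type} [Fintype X] (p : X → ℝ) : ℝ :=
  if (∑ i, p i) = 0 then 0 else (∑ i, p i) * shannon (fun i => p i / ∑ j, p j)

/-- Tsallis entropy of order `α` of a probability measure. -/
noncomputable def tsallis (α : ℝ) {X : Type} [Fintype X] (p : X → ℝ) : ℝ :=
  if α = 1 then shannon p else (1 / (α - 1)) * (1 - ∑ i, p i ^ α)

/-- Extended Tsallis entropy of order `α` of a measure on a finite set. -/
noncomputable def tsallisExt (α : ℝ) {X : Type} [Fintype X] (p : X → ℝ) : ℝ :=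
  if (∑ i, p i) = 0 then 0 else (∑ i, p i) ^ α * tsallis α (fun i => p i / ∑ j, p j)

/-- The conditions of the reformulated Faddeev theorem (Theorem 5):
nonnegativity, bijection-invariance, continuity, vanishing on a point,
and strong additivity. -/
def FaddeevConds (I : ∀ {X : Type} [Fintype X], (X → ℝ) → ℝ) : Prop :=
  (∀ {X : Type} [Fintype X] (p : X → ℝ), IsProb p → 0 ≤ I p) ∧
  (∀ {X X' : Type} [Fintype X] [Fintype X'] (e : X ≃ X') (p : X → ℝ),
    IsProb p → I (fun j => p (e.symm j)) = I p) ∧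
  (∀ n : ℕ, ContinuousOn (fun p : Fin n → ℝ => I p) {p | IsProb p}) ∧
  (I (fun _ : Fin 1 => (1 : ℝ)) = 0) ∧
  (∀ (n : ℕ) (Xs : Fin n → Type) [∀ i, Fintype (Xs i)]
    (p : Fin n → ℝ) (q : ∀ i, Xs i → ℝ),
    IsProb p → (∀ i, IsProb (q i)) →
    I (fun x : Σ i, Xs i => p x.1 * q x.1 x.2) = I p + ∑ i, p i * I (q i))

/-!
Faddeev's argument. Let `f n = uniformValue I n`, the value of `I` on the uniform distribution
on `n` points.
Splitting a uniform distribution into uniform blocks gives `f (a * b) = f a + f b` and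
`f (n + 1) = I (n/(n+1), 1/(n+1)) + n/(n+1) * f n`. By continuity at the point mass `(1, 0)`,
where `I` vanishes, the first term tends to `0`, and then so does `f (n + 1) - f n`. An additive
function with vanishing increments is a multiple of `log` (Erdős), so `f n = c * log n`, and
splitting once more gives `I = c * H` on distributions with rational entries. These are dense in
the simplex, and continuity finishes the proof.
-/

open Finset

lemma IsProb.le_one {X : Type} [Fintype X] {p : X → ℝ} (hp : IsProb p) (i : X) : p i ≤ 1 :=
  hp.2 ▸ single_le_sum (fun j _ => hp.1 j) (mem_univ i)

lemma IsProb.comp_equiv {X Y : Type} [Fintype X] [Fintype Y] {p : X → ℝ} (hp : IsProb p)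
    (e : X ≃ Y) : IsProb (fun j => p (e.symm j)) :=
  ⟨fun _ => hp.1 _, (e.symm.sum_comp p).trans hp.2⟩

lemma isProb_uniform (X : Type) [Fintype X] [Nonempty X] :
    IsProb (fun _ : X => (Fintype.card X : ℝ)⁻¹) :=
  ⟨fun _ => by positivity, by simp⟩

lemma isProb_single {X : Type} [Fintype X] [DecidableEq X] (x : X) :
    IsProb (Pi.single x (1 : ℝ)) :=
  ⟨fun j => by by_cases hj : j = x <;> simp [hj], by simp⟩

lemma single_mul_single_sigma {n : ℕ} [NeZero n] (s : Fin n → ℕ) :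
    (fun x : Σ i, Fin (s i + 1) =>
      (Pi.single 0 1 : Fin n → ℝ) x.1 * (Pi.single 0 1 : Fin (s x.1 + 1) → ℝ) x.2) =
      (Pi.single ⟨0, 0⟩ 1 : (Σ i, Fin (s i + 1)) → ℝ) := by
  funext ⟨i, j⟩
  by_cases hi : i = 0
  · subst hi
    by_cases hj : j = 0 <;> simp [hj]
  · simp [hi]

lemma shannon_eq_sum_negMulLog {X : Type} [Fintype X] (p : X → ℝ) :
    shannon p = ∑ i, negMulLog (p i) := by
  simp [shannon, negMulLog, sum_neg_distrib]

lemma shannon_nonneg {X : Type} [Fintype X] {p : X → ℝ} (hp : IsProb p) : 0 ≤ shannon p := by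
  rw [shannon_eq_sum_negMulLog]
  exact sum_nonneg fun i _ => negMulLog_nonneg (hp.1 i) (hp.le_one i)

lemma shannon_comp_equiv {X Y : Type} [Fintype X] [Fintype Y] (e : X ≃ Y) (p : X → ℝ) :
    shannon (fun j => p (e.symm j)) = shannon p := by
  simp only [shannon_eq_sum_negMulLog, e.symm.sum_comp (fun i => negMulLog (p i))]

lemma continuous_shannon (X : Type) [Fintype X] : Continuous (fun p : X → ℝ => shannon p) := by
  simp only [shannon_eq_sum_negMulLog]
  fun_prop

lemma shannon_sigma {ι : Type} [Fintype ι] {Xs : ι → Type} [∀ i, Fintype (Xs i)] (p : ι → ℝ)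
    {q : ∀ i, Xs i → ℝ} (hq : ∀ i, ∑ j, q i j = 1) :
    shannon (fun x : Σ i, Xs i => p x.1 * q x.1 x.2) = shannon p + ∑ i, p i * shannon (q i) := by
  simp only [shannon_eq_sum_negMulLog, Fintype.sum_sigma, negMulLog_mul, sum_add_distrib,
    ← sum_mul, ← mul_sum, hq, one_mul]

lemma faddeevConds_const_mul_shannon {c : ℝ} (hc : 0 ≤ c) :
    FaddeevConds (fun {X : Type} [Fintype X] (p : X → ℝ) => c * shannon p) := by
  refine ⟨fun p hp => mul_nonneg hc (shannon_nonneg hp),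
    fun e p _ => congrArg (c * ·) (shannon_comp_equiv e p),
    fun n => ((continuous_shannon _).const_smul c).continuousOn, by simp [shannon], ?_⟩
  intro n Xs _ p q _ hq
  simp only [shannon_sigma p fun i => (hq i).2, mul_add, mul_sum, mul_left_comm]

lemma tendsto_div_succ_of_recurrence {f ε : ℕ → ℝ}
    (hrec : ∀ n, 1 ≤ n → f (n + 1) = ε n + n / (n + 1) * f n) (hε : Tendsto ε atTop (𝓝 0)) :
    Tendsto (fun n : ℕ => f n / (n + 1)) atTop (𝓝 0) := by
  have hbound : ∀ n, 1 ≤ n → |f n| ≤ |f 1| + ∑ k ∈ range n, |ε k| := by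
    intro n hn
    induction n, hn using Nat.le_induction with
    | base => simp
    | succ n hn ih =>
      have hcoef : |(n : ℝ) / (n + 1)| ≤ 1 := by
        rw [abs_of_nonneg (by positivity), div_le_one (by positivity)]
        linarith
      calc |f (n + 1)| ≤ |ε n| + |(n : ℝ) / (n + 1)| * |f n| := by
            rw [hrec n hn, ← abs_mul]; exact abs_add_le _ _
        _ ≤ |ε n| + |f n| := by gcongr; exact mul_le_of_le_one_left (abs_nonneg _) hcoef
        _ ≤ |f 1| + ∑ k ∈ range (n + 1), |ε k| := by rw [sum_range_succ]; linarith
  have hcesaro : Tendsto (fun n : ℕ => |f 1| / n + (n : ℝ)⁻¹ * ∑ k ∈ range n, |ε k|) atTop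
      (𝓝 0) := by
    simpa using (tendsto_const_div_atTop_nhds_zero_nat |f 1|).add hε.abs.cesaro
  refine squeeze_zero_norm' ?_ hcesaro
  filter_upwards [eventually_ge_atTop 1] with n hn
  calc ‖f n / (n + 1)‖ ≤ |f n| / n := by
        rw [norm_div, Real.norm_eq_abs, Real.norm_eq_abs,
          abs_of_pos (by positivity : (0 : ℝ) < n + 1)]
        gcongr
        linarith
    _ ≤ (|f 1| + ∑ k ∈ range n, |ε k|) / n := by gcongr; exact hbound n hn
    _ = |f 1| / n + (n : ℝ)⁻¹ * ∑ k ∈ range n, |ε k| := by ring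

lemma tendsto_sub_of_recurrence {f ε : ℕ → ℝ}
    (hrec : ∀ n, 1 ≤ n → f (n + 1) = ε n + n / (n + 1) * f n) (hε : Tendsto ε atTop (𝓝 0)) :
    Tendsto (fun n => f (n + 1) - f n) atTop (𝓝 0) := by
  have hlim := hε.sub (tendsto_div_succ_of_recurrence hrec hε)
  rw [sub_zero] at hlim
  refine hlim.congr' ?_
  filter_upwards [eventually_ge_atTop 1] with n hn
  rw [hrec n hn]
  field_simp
  ring

lemma abs_le_logb_add_of_abs_sub_le {g : ℕ → ℝ}
    (hmul : ∀ m n, 0 < m → 0 < n → g (m * n) = g m + g n) (h2 : g 2 = 0) {ε : ℝ} (hε : 0 ≤ ε)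
    {T : ℕ} (hT : ∀ j, T ≤ j → |g (j + 1) - g j| ≤ ε) :
    ∃ C, ∀ N, 1 ≤ N → |g N| ≤ ε * logb 2 N + C := by
  set C := ∑ k ∈ range (2 * T + 2), |g k|
  refine ⟨C, fun N => ?_⟩
  induction N using Nat.strong_induction_on with
  | _ N ih =>
  intro hN
  by_cases hsmall : N < 2 * T + 2
  · have hlog : 0 ≤ ε * logb 2 N := mul_nonneg hε (logb_nonneg one_lt_two (by exact_mod_cast hN))
    have := single_le_sum (f := fun k => |g k|) (fun k _ => abs_nonneg _) (mem_range.2 hsmall)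
    linarith
  set M := N / 2
  have hM : 1 ≤ M := by omega
  have hstep : |g N - g M| ≤ ε := by
    have hdouble : g (2 * M) = g M := by rw [hmul 2 M two_pos hM, h2, zero_add]
    rcases Nat.even_or_odd' N with ⟨M', hM' | hM'⟩
    · obtain rfl : M' = M := by omega
      rw [hM', hdouble, sub_self, abs_zero]
      exact hε
    · obtain rfl : M' = M := by omega
      rw [hM', ← hdouble]
      exact hT _ (by omega)
  have hlog : 1 + logb 2 M ≤ logb 2 N := by
    have hMpos : (0 : ℝ) < M := by exact_mod_cast hM
    calc 1 + logb 2 M = logb 2 (2 * M) := by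
          rw [logb_mul two_ne_zero hMpos.ne', logb_self_eq_one one_lt_two]
      _ ≤ logb 2 N := logb_le_logb_of_le one_lt_two (by positivity) (by exact_mod_cast (by omega))
  calc |g N| ≤ |g N - g M| + |g M| := by linarith [abs_sub_abs_le_abs_sub (g N) (g M)]
    _ ≤ ε + (ε * logb 2 M + C) := add_le_add hstep (ih M (by omega) hM)
    _ = ε * (1 + logb 2 M) + C := by ring
    _ ≤ ε * logb 2 N + C := by gcongr

lemma eq_zero_of_tendsto_sub {g : ℕ → ℝ} (hmul : ∀ m n, 0 < m → 0 < n → g (m * n) = g m + g n)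
    (h2 : g 2 = 0) (hg : Tendsto (fun n => g (n + 1) - g n) atTop (𝓝 0)) {n : ℕ} (hn : 0 < n) :
    g n = 0 := by
  have hpow : ∀ k : ℕ, g (n ^ k) = k * g n := by
    have h1 : g 1 = 0 := by linarith [hmul 1 1 one_pos one_pos]
    intro k
    induction k with
    | zero => simp [h1]
    | succ k ih => rw [pow_succ, hmul _ _ (by positivity) hn, ih]; push_cast; ring
  have hsmall : ∀ ε > 0, |g n| ≤ ε * logb 2 n := by
    intro ε hε
    obtain ⟨T, hT⟩ : ∃ T, ∀ j, T ≤ j → |g (j + 1) - g j| ≤ ε := by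
      simpa [dist_eq_norm] using (Metric.tendsto_atTop.1 hg ε hε).imp fun T h j hj => (h j hj).le
    obtain ⟨C, hC⟩ := abs_le_logb_add_of_abs_sub_le hmul h2 hε.le hT
    have hk : ∀ k : ℕ, 1 ≤ k → |g n| ≤ ε * logb 2 n + C / k := by
      intro k hk
      have hk' : (0 : ℝ) < k := by exact_mod_cast hk
      have := hC (n ^ k) (Nat.one_le_pow _ _ hn)
      rw [hpow, Nat.cast_pow, logb_pow, abs_mul, Nat.abs_cast] at this
      rw [← sub_le_iff_le_add', le_div_iff₀ hk']
      linarith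
    have hlim : Tendsto (fun k : ℕ => ε * logb 2 n + C / k) atTop (𝓝 (ε * logb 2 n)) := by
      simpa using tendsto_const_nhds.add (tendsto_const_div_atTop_nhds_zero_nat C)
    exact ge_of_tendsto hlim (eventually_atTop.2 ⟨1, hk⟩)
  have hlim : Tendsto (fun ε => ε * logb 2 n) (𝓝[>] 0) (𝓝 0) := by
    simpa using tendsto_nhdsWithin_of_tendsto_nhds
      ((continuous_mul_const (logb 2 n)).tendsto 0)
  exact abs_nonpos_iff.1 (ge_of_tendsto hlim (eventually_nhdsWithin_of_forall hsmall))

theorem eq_mul_log_of_tendsto_sub {f : ℕ → ℝ}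
    (hmul : ∀ m n, 0 < m → 0 < n → f (m * n) = f m + f n)
    (hf : Tendsto (fun n => f (n + 1) - f n) atTop (𝓝 0)) {n : ℕ} (hn : 0 < n) :
    f n = f 2 / log 2 * log n := by
  have key := eq_zero_of_tendsto_sub (g := fun n => f n - f 2 / log 2 * log n) ?_ ?_ ?_ hn
  · exact sub_eq_zero.1 key
  · intro a b ha hb
    simp only [Nat.cast_mul, hmul a b ha hb,
      log_mul (Nat.cast_ne_zero.2 ha.ne') (Nat.cast_ne_zero.2 hb.ne')]
    ring
  · have : log 2 ≠ 0 := (log_pos one_lt_two).ne'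
    simp only [Nat.cast_ofNat]; field_simp; ring
  · have := hf.sub (tendsto_log_nat_add_one_sub_log.const_mul (f 2 / log 2))
    simp only [mul_zero, sub_zero] at this
    refine this.congr fun k => ?_
    push_cast; ring

section RationalDistributions

variable {ι : Type} [Fintype ι]

noncomputable def ratDist (m : ι → ℕ) (i : ι) : ℝ := m i / ∑ j, (m j : ℝ)

lemma isProb_ratDist {m : ι → ℕ} (hm : 0 < ∑ j, m j) : IsProb (ratDist m) := by
  have hm' : (0 : ℝ) < ∑ j, (m j : ℝ) := by exact_mod_cast hm
  refine ⟨fun i => by unfold ratDist; positivity, ?_⟩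
  simp only [ratDist, ← sum_div, div_self hm'.ne']

lemma shannon_ratDist (m : ι → ℕ) :
    shannon (ratDist m) = log (∑ j, (m j : ℝ)) - ∑ i, ratDist m i * log (m i) := by
  rcases eq_or_ne (∑ j, (m j : ℝ)) 0 with hN | hN
  · simp [shannon, ratDist, hN]
  have hterm : ∀ i, ratDist m i * log (ratDist m i) =
      ratDist m i * log (m i) - ratDist m i * log (∑ j, (m j : ℝ)) := by
    intro i
    rcases eq_or_ne (m i) 0 with hi | hi
    · simp [ratDist, hi]
    · rw [ratDist, log_div (Nat.cast_ne_zero.2 hi) hN]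
      ring
  have hsum : ∑ i, ratDist m i = 1 := by simp only [ratDist, ← sum_div, div_self hN]
  rw [shannon, sum_congr rfl fun i _ => hterm i, sum_sub_distrib, ← sum_mul, hsum]
  ring

lemma tendsto_ratDist_floor {p : ι → ℝ} (hp : IsProb p) :
    Tendsto (fun k : ℕ => ratDist fun i => ⌊p i * k⌋₊ + 1) atTop (𝓝 p) := by
  have hcoord : ∀ i, Tendsto (fun k : ℕ => ((⌊p i * k⌋₊ + 1 : ℕ) : ℝ) / k) atTop (𝓝 (p i)) := by
    intro i
    have hfloor := (tendsto_nat_floor_mul_div_atTop (hp.1 i)).comp tendsto_natCast_atTop_atTop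
    simpa [add_div] using hfloor.add (tendsto_const_div_atTop_nhds_zero_nat 1)
  have htotal : Tendsto (fun k : ℕ => ∑ i, ((⌊p i * k⌋₊ + 1 : ℕ) : ℝ) / k) atTop (𝓝 1) :=
    hp.2 ▸ tendsto_finsetSum _ fun i _ => hcoord i
  refine tendsto_pi_nhds.2 fun i => ?_
  have hlim := (hcoord i).div htotal one_ne_zero
  rw [div_one] at hlim
  refine hlim.congr' ?_
  filter_upwards [eventually_ge_atTop 1] with k hk
  have hk' : (k : ℝ) ≠ 0 := by positivity
  simp only [Pi.div_apply, ratDist, ← sum_div, div_div_div_cancel_right₀ hk']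

end RationalDistributions

noncomputable def uniformValue (I : ∀ {X : Type} [Fintype X], (X → ℝ) → ℝ) (n : ℕ) : ℝ :=
  I (fun _ : Fin n => (n : ℝ)⁻¹)

namespace FaddeevConds

variable {I : ∀ {X : Type} [Fintype X], (X → ℝ) → ℝ}

lemma nonneg (hI : FaddeevConds I) {X : Type} [Fintype X] {p : X → ℝ} (hp : IsProb p) :
    0 ≤ I p :=
  hI.1 p hp

lemma comp_equiv (hI : FaddeevConds I) {X Y : Type} [Fintype X] [Fintype Y] (e : X ≃ Y)
    {p : X → ℝ} (hp : IsProb p) : I (fun j => p (e.symm j)) = I p :=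
  hI.2.1 e p hp

lemma continuousOn (hI : FaddeevConds I) (n : ℕ) :
    ContinuousOn (fun p : Fin n → ℝ => I p) {p | IsProb p} :=
  hI.2.2.1 n

lemma apply_one (hI : FaddeevConds I) : I (fun _ : Fin 1 => (1 : ℝ)) = 0 :=
  hI.2.2.2.1

lemma apply_sigma (hI : FaddeevConds I) {n : ℕ} (Xs : Fin n → Type) [∀ i, Fintype (Xs i)]
    {p : Fin n → ℝ} {q : ∀ i, Xs i → ℝ} (hp : IsProb p) (hq : ∀ i, IsProb (q i)) :
    I (fun x : Σ i, Xs i => p x.1 * q x.1 x.2) = I p + ∑ i, p i * I (q i) :=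
  hI.2.2.2.2 n Xs p q hp hq

lemma apply_single_eq (hI : FaddeevConds I) {X Y : Type} [Fintype X] [Fintype Y]
    [DecidableEq X] [DecidableEq Y] (x : X) (y : Y) (h : Fintype.card X = Fintype.card Y) :
    I (Pi.single x (1 : ℝ)) = I (Pi.single y (1 : ℝ)) := by
  let e := (Fintype.equivOfCardEq h).trans (Equiv.swap (Fintype.equivOfCardEq h x) y)
  have hex : e x = y := by simp [e]
  rw [← hI.comp_equiv e (isProb_single x)]
  congr 1
  rw [← hex]
  exact Pi.single_comp_equiv e.symm x 1

/-- Both groupings of the point mass on three points, `(1,0) ⊗ ((1,0), (1))` and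
`(1,0) ⊗ ((1), (1,0))`, give `I(1,0) + I(1,0) = I(1,0) + I(1)`. -/
lemma apply_single_two (hI : FaddeevConds I) : I (Pi.single (0 : Fin 2) (1 : ℝ)) = 0 := by
  have hA := hI.apply_sigma (fun i : Fin 2 => Fin (![1, 0] i + 1)) (isProb_single 0)
    fun _ => isProb_single 0
  have hB := hI.apply_sigma (fun i : Fin 2 => Fin (![0, 1] i + 1)) (isProb_single 0)
    fun _ => isProb_single 0
  rw [single_mul_single_sigma] at hA hB
  rw [hI.apply_single_eq _ (⟨0, 0⟩ : Σ i, Fin (![0, 1] i + 1)) (by simp [Fin.sum_univ_two])]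
    at hA
  have h1 : I (Pi.single (0 : Fin 1) (1 : ℝ)) = 0 := by
    rw [← hI.apply_one]; congr 1; funext j; simp [Subsingleton.elim j 0]
  simp only [Fin.sum_univ_two, Pi.single_eq_same, one_mul, Pi.single_eq_of_ne one_ne_zero,
    zero_mul, add_zero] at hA hB
  change _ = _ + I (Pi.single (0 : Fin 2) (1 : ℝ)) at hA
  change _ = _ + I (Pi.single (0 : Fin 1) (1 : ℝ)) at hB
  linarith

lemma apply_uniform (hI : FaddeevConds I) (X : Type) [Fintype X] [Nonempty X] :
    I (fun _ : X => (Fintype.card X : ℝ)⁻¹) = uniformValue I (Fintype.card X) :=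
  (hI.comp_equiv (Fintype.equivFin X) (isProb_uniform X)).symm

lemma uniformValue_nonneg (hI : FaddeevConds I) {n : ℕ} (hn : 0 < n) : 0 ≤ uniformValue I n :=
  have : NeZero n := ⟨hn.ne'⟩
  hI.nonneg (by simpa using isProb_uniform (Fin n))

lemma uniformValue_one (hI : FaddeevConds I) : uniformValue I 1 = 0 := by
  simpa [uniformValue] using hI.apply_one

lemma uniformValue_sum (hI : FaddeevConds I) {n : ℕ} (hn : 0 < n) (m : Fin n → ℕ)
    (hm : ∀ i, 0 < m i) :
    uniformValue I (∑ i, m i) = I (ratDist m) + ∑ i, ratDist m i * uniformValue I (m i) := by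
  have hq : ∀ i, IsProb (fun _ : Fin (m i) => (m i : ℝ)⁻¹) := fun i =>
    have : NeZero (m i) := ⟨(hm i).ne'⟩
    by simpa using isProb_uniform (Fin (m i))
  have : Nonempty (Σ i, Fin (m i)) := ⟨⟨⟨0, hn⟩, ⟨0, hm _⟩⟩⟩
  have hcard : Fintype.card (Σ i, Fin (m i)) = ∑ i, m i := by simp
  have hconst : (fun x : Σ i, Fin (m i) => ratDist m x.1 * (m x.1 : ℝ)⁻¹) =
      fun _ => (Fintype.card (Σ i, Fin (m i)) : ℝ)⁻¹ := by
    funext ⟨i, _⟩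
    have := hm i
    simp only [ratDist, hcard, Nat.cast_sum]
    field_simp
  rw [← hcard, ← hI.apply_uniform, ← hconst]
  exact hI.apply_sigma _ (isProb_ratDist (sum_pos (fun i _ => hm i) ⟨⟨0, hn⟩, mem_univ _⟩)) hq

lemma uniformValue_mul (hI : FaddeevConds I) {a b : ℕ} (ha : 0 < a) (hb : 0 < b) :
    uniformValue I (a * b) = uniformValue I a + uniformValue I b := by
  have h := hI.uniformValue_sum ha (fun _ => b) fun _ => hb
  have hr : ratDist (fun _ : Fin a => b) = fun _ => (a : ℝ)⁻¹ := by
    funext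
    have : (0 : ℝ) < b := by exact_mod_cast hb
    simp only [ratDist, sum_const, card_univ, Fintype.card_fin, nsmul_eq_mul]
    field_simp
  have ha' : (a : ℝ) ≠ 0 := by positivity
  simp only [hr, sum_const, card_univ, Fintype.card_fin, smul_eq_mul, nsmul_eq_mul] at h
  rw [h, ← mul_assoc, mul_inv_cancel₀ ha', one_mul]
  rfl

lemma uniformValue_succ (hI : FaddeevConds I) {n : ℕ} (hn : 0 < n) :
    uniformValue I (n + 1) = I (ratDist ![n, 1]) + n / (n + 1) * uniformValue I n := by
  have h := hI.uniformValue_sum two_pos ![n, 1] (by simp [Fin.forall_fin_two, hn])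
  simp only [Fin.sum_univ_two, Matrix.cons_val_zero, Matrix.cons_val_one, uniformValue_one hI,
    mul_zero, add_zero] at h
  rw [h]
  simp [ratDist, Fin.sum_univ_two]

lemma tendsto_apply_ratDist_two (hI : FaddeevConds I) :
    Tendsto (fun n : ℕ => I (ratDist ![n, 1])) atTop (𝓝 0) := by
  have hlim : Tendsto (fun n : ℕ => ratDist ![n, 1]) atTop (𝓝 (Pi.single 0 1)) := by
    refine tendsto_pi_nhds.2 (Fin.forall_fin_two.2 ⟨?_, ?_⟩)
    · simpa [ratDist, Fin.sum_univ_two] using tendsto_natCast_div_add_atTop (1 : ℝ)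
    · simpa [ratDist, Fin.sum_univ_two] using tendsto_one_div_add_atTop_nhds_zero_nat (𝕜 := ℝ)
  have := ((hI.continuousOn 2).continuousWithinAt (isProb_single 0)).tendsto.comp
    (tendsto_nhdsWithin_iff.2 ⟨hlim, Eventually.of_forall fun n => isProb_ratDist (by simp)⟩)
  rwa [hI.apply_single_two] at this

lemma uniformValue_eq (hI : FaddeevConds I) {n : ℕ} (hn : 0 < n) :
    uniformValue I n = uniformValue I 2 / log 2 * log n :=
  eq_mul_log_of_tendsto_sub (fun _ _ => hI.uniformValue_mul)
    (tendsto_sub_of_recurrence (fun _ => hI.uniformValue_succ) hI.tendsto_apply_ratDist_two) hn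

lemma apply_ratDist (hI : FaddeevConds I) {n : ℕ} (hn : 0 < n) (m : Fin n → ℕ)
    (hm : ∀ i, 0 < m i) :
    I (ratDist m) = uniformValue I 2 / log 2 * shannon (ratDist m) := by
  have h := hI.uniformValue_sum hn m hm
  have hblocks : ∑ i, ratDist m i * uniformValue I (m i) =
      ∑ i, uniformValue I 2 / log 2 * (ratDist m i * log (m i)) :=
    sum_congr rfl fun i _ => by rw [hI.uniformValue_eq (hm i)]; ring
  rw [hI.uniformValue_eq (sum_pos (fun i _ => hm i) ⟨⟨0, hn⟩, mem_univ _⟩), hblocks,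
    Nat.cast_sum] at h
  rw [shannon_ratDist, mul_sub, mul_sum]
  linarith

lemma apply_eq_fin (hI : FaddeevConds I) {n : ℕ} {p : Fin n → ℝ} (hp : IsProb p) :
    I p = uniformValue I 2 / log 2 * shannon p := by
  have hn : 0 < n := Nat.pos_of_ne_zero fun h => by subst h; simpa using hp.2
  have hlim := tendsto_ratDist_floor hp
  have hI_lim := ((hI.continuousOn n).continuousWithinAt hp).tendsto.comp
    (tendsto_nhdsWithin_iff.2 ⟨hlim, Eventually.of_forall fun k =>
      isProb_ratDist (sum_pos (fun i _ => Nat.succ_pos _) ⟨⟨0, hn⟩, mem_univ _⟩)⟩)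
  have hshannon_lim := (((continuous_shannon _).tendsto p).comp hlim).const_mul
    (uniformValue I 2 / log 2)
  exact tendsto_nhds_unique hI_lim
    (hshannon_lim.congr fun k => (hI.apply_ratDist hn _ fun i => Nat.succ_pos _).symm)

lemma apply_eq (hI : FaddeevConds I) {X : Type} [Fintype X] {p : X → ℝ} (hp : IsProb p) :
    I p = uniformValue I 2 / log 2 * shannon p := by
  rw [← hI.comp_equiv (Fintype.equivFin X) hp, hI.apply_eq_fin (hp.comp_equiv _),
    shannon_comp_equiv]

end FaddeevConds

/-- Reformulated Faddeev theorem: a map satisfying the conditions is a nonnegative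
multiple of Shannon entropy, and conversely. -/
theorem stmt5 :
    (∀ I : ∀ {X : Type} [Fintype X], (X → ℝ) → ℝ, FaddeevConds I →
      ∃ c : ℝ, 0 ≤ c ∧ ∀ {X : Type} [Fintype X] (p : X → ℝ), IsProb p →
        I p = c * shannon p) ∧
    (∀ c : ℝ, 0 ≤ c →
      FaddeevConds (fun {X : Type} [Fintype X] (p : X → ℝ) => c * shannon p)) := by
  refine ⟨fun I hI => ?_, fun _ hc => faddeevConds_const_mul_shannon hc⟩
  exact ⟨uniformValue I 2 / log 2,
    div_nonneg (hI.uniformValue_nonneg two_pos) (log_nonneg one_le_two), fun _ hp => hI.apply_eq hp⟩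
end

section
/- (Convex linearity of information loss) Let f : (X,p) → (X′,p′) and g : (Y,q) → (Y′,q′) be measure-preserving functions between finite probability spaces and let λ ∈ [0,1]. Then the information loss of the convex combination satisfies (H(λp ⊕ (1−λ)q) − H(λp′ ⊕ (1−λ)q′)) = λ(H(p) − H(p′)) + (1−λ)(H(q) − H(q′)), where H denotes Shannon entropy. -/
open scoped BigOperators Classical
open Filter Topology Real

lemma mul_log_mul' (a b : ℝ) :
    a * b * Real.log (a * b) = a * b * Real.log a + a * b * Real.log b := by
  rcases eq_or_ne a 0 with h | h
  · simp [h]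
  rcases eq_or_ne b 0 with h' | h'
  · simp [h']
  rw [Real.log_mul h h']; ring

lemma shannon_cvx {X Y : Type} [Fintype X] [Fintype Y] (p : X → ℝ) (q : Y → ℝ)
    (lam : ℝ) (hp : ∑ i, p i = 1) (hq : ∑ i, q i = 1) :
    shannon (cvx lam p q) = lam * shannon p + (1 - lam) * shannon q
      - (lam * Real.log lam + (1 - lam) * Real.log (1 - lam)) := by
  unfold shannon cvx
  rw [Fintype.sum_sum_type]
  simp only [Sum.elim_inl, Sum.elim_inr, mul_log_mul']
  rw [Finset.sum_add_distrib, Finset.sum_add_distrib]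
  simp only [mul_assoc, ← Finset.mul_sum, ← Finset.sum_mul, hp, hq]
  ring

/-- Convex linearity of information loss. -/
theorem stmt10 {X X' Y Y' : Type} [Fintype X] [Fintype X'] [Fintype Y] [Fintype Y']
    (p : X → ℝ) (p' : X' → ℝ) (q : Y → ℝ) (q' : Y' → ℝ)
    (f : X → X') (g : Y → Y') (lam : ℝ) (h0 : 0 ≤ lam) (h1 : lam ≤ 1)
    (hp : IsProb p) (hp' : IsProb p') (hq : IsProb q) (hq' : IsProb q')
    (hf : IsMP p p' f) (hg : IsMP q q' g) :
    shannon (cvx lam p q) - shannon (cvx lam p' q')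
      = lam * (shannon p - shannon p') + (1 - lam) * (shannon q - shannon q') := by
  rw [shannon_cvx p q lam hp.2 hq.2, shannon_cvx p' q' lam hp'.2 hq'.2]
  ring
end

section
/- Let α ∈ (0,∞) and c ≥ 0. The map F defined on measure-preserving functions f : (X,p) → (Y,q) between finite probability spaces by F(f) = c(H_α(p) − H_α(q)), where H_α is the Tsallis entropy of order α, takes values in [0,∞) and satisfies: (1) Functoriality: F(f ∘ g) = F(f) + F(g); (2) F(λf ⊕ (1−λ)g) = λ^α F(f) + (1−λ)^α F(g) for all λ ∈ [0,1]; (3) Continuity. -/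
open scoped BigOperators Classical
open Filter Topology Real

/-!
For a probability vector `p`, `H_α(p) = ∑ᵢ h_α(pᵢ)` with `h_α(x) = (x - x^α)/(α - 1)`
(`h_1(x) = -x log x`). For `α > 0` the function `h_α` is subadditive on `[0, ∞)`, so pushing `p`
forward, which merges the masses in each fibre, can only lower the entropy. The identity
`h_α(t x) = t^α h_α(x) + x h_α(t)` yields the chain rule
`H_α(λp ⊕ (1-λ)q) = λ^α H_α(p) + (1-λ)^α H_α(q) + h_α(λ) + h_α(1-λ)`, whose last two terms cancel
in the difference defining `F`. Functoriality is a telescoping sum.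
-/

noncomputable def tsallisTerm (α x : ℝ) : ℝ :=
  if α = 1 then negMulLog x else (x - x ^ α) / (α - 1)

lemma tsallis_eq_sum_tsallisTerm (α : ℝ) {X : Type} [Fintype X] {p : X → ℝ}
    (hp : ∑ i, p i = 1) : tsallis α p = ∑ i, tsallisTerm α (p i) := by
  unfold tsallis tsallisTerm
  split_ifs
  · simp only [shannon, negMulLog, neg_mul, Finset.sum_neg_distrib]
  · rw [← Finset.sum_div, Finset.sum_sub_distrib, hp]
    ring

lemma negMulLog_add_le {x y : ℝ} (hx : 0 ≤ x) (hy : 0 ≤ y) :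
    negMulLog (x + y) ≤ negMulLog x + negMulLog y := by
  have mul_log_le (a b : ℝ) (ha : 0 ≤ a) (hb : 0 ≤ b) : a * log a ≤ a * log (a + b) := by
    rcases ha.eq_or_lt with rfl | ha
    · simp
    · exact mul_le_mul_of_nonneg_left (log_le_log ha (by linarith)) ha.le
  have hx' := mul_log_le x y hx hy
  have hy' := mul_log_le y x hy hx
  rw [add_comm y x] at hy'
  simp only [negMulLog, neg_mul, add_mul]
  linarith

lemma tsallisTerm_zero {α : ℝ} (hα : 0 < α) : tsallisTerm α 0 = 0 := by
  simp [tsallisTerm, zero_rpow hα.ne']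

lemma tsallisTerm_add_le {α x y : ℝ} (hα : 0 < α) (hx : 0 ≤ x) (hy : 0 ≤ y) :
    tsallisTerm α (x + y) ≤ tsallisTerm α x + tsallisTerm α y := by
  unfold tsallisTerm
  split_ifs with h1
  · exact negMulLog_add_le hx hy
  rw [← add_div]
  rcases lt_or_gt_of_ne h1 with hlt | hgt
  · apply div_le_div_of_nonpos_of_le (by linarith)
    linarith [rpow_add_le_add_rpow hx hy hα.le hlt.le]
  · apply div_le_div_of_nonneg_right _ (by linarith)
    linarith [add_rpow_le_rpow_add hx hy hgt.le]

lemma tsallisTerm_mul (α : ℝ) {t x : ℝ} (ht : 0 ≤ t) (hx : 0 ≤ x) :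
    tsallisTerm α (t * x) = t ^ α * tsallisTerm α x + x * tsallisTerm α t := by
  unfold tsallisTerm
  split_ifs with h1
  · rw [negMulLog_mul, h1, rpow_one, add_comm]
  · rw [mul_rpow ht hx]
    field_simp
    ring

lemma continuous_tsallis {α : ℝ} (hα : 0 ≤ α) {X : Type} [Fintype X] :
    Continuous fun p : X → ℝ => tsallis α p := by
  unfold tsallis shannon
  split_ifs
  · exact (continuous_finsetSum _ fun i _ => continuous_mul_log.comp (continuous_apply i)).neg
  · have := continuous_rpow_const hα
    fun_prop

lemma IsMP.eq_sum_fiber {X Y : Type} [Fintype X] [Fintype Y] {p : X → ℝ} {q : Y → ℝ}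
    {f : X → Y} (hf : IsMP p q f) (j : Y) : q j = ∑ i with f i = j, p i := by
  rw [hf j, Finset.sum_filter]

lemma IsMP.sum_eq {X Y : Type} [Fintype X] [Fintype Y] {p : X → ℝ} {q : Y → ℝ}
    {f : X → Y} (hf : IsMP p q f) : ∑ j, q j = ∑ i, p i := by
  simp only [hf.eq_sum_fiber]
  exact Finset.sum_fiberwise Finset.univ f p

lemma tsallis_le_of_isMP {α : ℝ} (hα : 0 < α) {X Y : Type} [Fintype X] [Fintype Y]
    {p : X → ℝ} {q : Y → ℝ} {f : X → Y} (hp : IsProb p) (hf : IsMP p q f) :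
    tsallis α q ≤ tsallis α p := by
  rw [tsallis_eq_sum_tsallisTerm α hp.2, tsallis_eq_sum_tsallisTerm α (hf.sum_eq.trans hp.2),
    ← Finset.sum_fiberwise Finset.univ f]
  refine Finset.sum_le_sum fun j _ => ?_
  rw [hf.eq_sum_fiber]
  exact Finset.le_sum_of_subadditive_on_pred _ (0 ≤ ·) (tsallisTerm_zero hα).le
    (fun x y hx hy => tsallisTerm_add_le hα hx hy) (fun _ _ => add_nonneg) _
    fun i _ => hp.1 i

lemma sum_tsallisTerm_mul (α : ℝ) {X : Type} [Fintype X] {t : ℝ} (ht : 0 ≤ t)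
    {p : X → ℝ} (hp : IsProb p) :
    ∑ i, tsallisTerm α (t * p i) = t ^ α * tsallis α p + tsallisTerm α t := by
  rw [tsallis_eq_sum_tsallisTerm α hp.2, Finset.mul_sum]
  simp only [tsallisTerm_mul α ht (hp.1 _), Finset.sum_add_distrib, ← Finset.sum_mul, hp.2,
    one_mul]

lemma tsallis_cvx (α : ℝ) {X Y : Type} [Fintype X] [Fintype Y] {lam : ℝ} (hl0 : 0 ≤ lam)
    (hl1 : lam ≤ 1) {p : X → ℝ} {q : Y → ℝ} (hp : IsProb p) (hq : IsProb q) :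
    tsallis α (cvx lam p q) = lam ^ α * tsallis α p + (1 - lam) ^ α * tsallis α q
      + (tsallisTerm α lam + tsallisTerm α (1 - lam)) := by
  have hsum : ∑ z, cvx lam p q z = 1 := by
    simp only [cvx, Fintype.sum_sum_type, Sum.elim_inl, Sum.elim_inr, ← Finset.mul_sum, hp.2,
      hq.2]
    ring
  rw [tsallis_eq_sum_tsallisTerm α hsum, Fintype.sum_sum_type]
  simp only [cvx, Sum.elim_inl, Sum.elim_inr]
  rw [sum_tsallisTerm_mul α hl0 hp, sum_tsallisTerm_mul α (by linarith) hq]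
  ring

/-- The map `f ↦ c (H_α(p) - H_α(q))` is nonnegative, functorial, compatible with
convex combinations with exponent `α`, and continuous. -/
theorem stmt15 (α : ℝ) (hα : 0 < α) (c : ℝ) (hc : 0 ≤ c) :
    -- takes values in [0, ∞)
    (∀ {X Y : Type} [Fintype X] [Fintype Y] (p : X → ℝ) (q : Y → ℝ) (f : X → Y),
      IsProb p → IsProb q → IsMP p q f → 0 ≤ c * (tsallis α p - tsallis α q)) ∧
    -- functoriality
    (∀ {X Y Z : Type} [Fintype X] [Fintype Y] [Fintype Z]
      (p : X → ℝ) (q : Y → ℝ) (r : Z → ℝ) (g : X → Y) (f : Y → Z),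
      IsProb p → IsProb q → IsProb r → IsMP p q g → IsMP q r f →
      c * (tsallis α p - tsallis α r)
        = c * (tsallis α q - tsallis α r) + c * (tsallis α p - tsallis α q)) ∧
    -- compatibility with convex combinations
    (∀ {X X' Y Y' : Type} [Fintype X] [Fintype X'] [Fintype Y] [Fintype Y']
      (p : X → ℝ) (p' : X' → ℝ) (q : Y → ℝ) (q' : Y' → ℝ) (f : X → X') (g : Y → Y')
      (lam : ℝ), 0 ≤ lam → lam ≤ 1 →
      IsProb p → IsProb p' → IsProb q → IsProb q' → IsMP p p' f → IsMP q q' g →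
      c * (tsallis α (cvx lam p q) - tsallis α (cvx lam p' q'))
        = lam ^ α * (c * (tsallis α p - tsallis α p'))
          + (1 - lam) ^ α * (c * (tsallis α q - tsallis α q'))) ∧
    -- continuity
    (∀ {X Y : Type} [Fintype X] [Fintype Y]
      (pn : ℕ → X → ℝ) (qn : ℕ → Y → ℝ) (fn : ℕ → X → Y)
      (p : X → ℝ) (q : Y → ℝ) (f : X → Y),
      (∀ n, IsProb (pn n)) → (∀ n, IsProb (qn n)) → (∀ n, IsMP (pn n) (qn n) (fn n)) →
      IsProb p → IsProb q → IsMP p q f →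
      (∀ᶠ n in atTop, fn n = f) →
      (∀ i, Tendsto (fun n => pn n i) atTop (𝓝 (p i))) →
      (∀ j, Tendsto (fun n => qn n j) atTop (𝓝 (q j))) →
      Tendsto (fun n => c * (tsallis α (pn n) - tsallis α (qn n))) atTop
        (𝓝 (c * (tsallis α p - tsallis α q)))) := by
  refine ⟨fun p q f hp _ hf => mul_nonneg hc (sub_nonneg.2 (tsallis_le_of_isMP hα hp hf)),
    fun _ _ _ _ _ _ _ _ _ _ => by ring, ?_, ?_⟩
  · intro X X' Y Y' _ _ _ _ p p' q q' f g lam hl0 hl1 hp hp' hq hq' _ _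
    rw [tsallis_cvx α hl0 hl1 hp hq, tsallis_cvx α hl0 hl1 hp' hq']
    ring
  · intro X Y _ _ pn qn fn p q f _ _ _ _ _ _ _ hpn hqn
    exact (((continuous_tsallis hα.le).tendsto p).comp (tendsto_pi_nhds.2 hpn)).sub
      (((continuous_tsallis hα.le).tendsto q).comp (tendsto_pi_nhds.2 hqn)) |>.const_mul c
end
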